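/- arXiv:1607.02081 — 4 statements merged into one kernel-verified Lean document; each statement's English description precedes it below -/
import Mathlib

section
/- Let N ≥ 3 be an integer and let p, q be distinct primes satisfying condition (W). Then for every integer n with 3 ≤ n ≤ N+1 there exists a unique positive real number t such that max(h_n·log p, h_{n−1}·log q)^t = max(h_{n−1}·log p, h_{n−2}·log q)^t + max(h_{n−2}·log p, h_{n−3}·log q)^t, and moreover this t satisfies t ≥ 1. -/
open Real

/-- The golden ratio `(1 + √5)/2`. -/
noncomputable def phiR : ℝ := (1 + Real.sqrt 5) / 2

/-- `mmax p q n = max(h_n·log p, h_{n-1}·log q)`, the logarithmic Mahler measure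
of `p^{h_n}/q^{h_{n-1}}` for distinct primes `p`, `q`, where `h` is Fibonacci. -/
noncomputable def mmax (p q n : ℕ) : ℝ :=
  max ((Nat.fib n : ℝ) * Real.log p) ((Nat.fib (n - 1) : ℝ) * Real.log q)

/-- `gmax n = max(h_n, φ·h_{n-1})`. -/
noncomputable def gmax (n : ℕ) : ℝ :=
  max (Nat.fib n : ℝ) (phiR * (Nat.fib (n - 1) : ℝ))

/-- The equation defining `t_n(p,q)`:
`m(p^{h_n}/q^{h_{n-1}})^t = m(p^{h_{n-1}}/q^{h_{n-2}})^t + m(p^{h_{n-2}}/q^{h_{n-3}})^t`. -/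
def peq (p q n : ℕ) (t : ℝ) : Prop :=
  mmax p q n ^ t = mmax p q (n - 1) ^ t + mmax p q (n - 2) ^ t

/-- The equation defining `s_n`:
`max(h_n, φ h_{n-1})^t = max(h_{n-1}, φ h_{n-2})^t + max(h_{n-2}, φ h_{n-3})^t`. -/
def geq (n : ℕ) (t : ℝ) : Prop :=
  gmax n ^ t = gmax (n - 1) ^ t + gmax (n - 2) ^ t

/-- Condition (W) on a pair of primes `(p,q)` relative to `N`. -/
def CondW (N p q : ℕ) : Prop :=
  ((Nat.fib N : ℝ) / Nat.fib (N - 1) < Real.log q / Real.log p ∧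
    Real.log q / Real.log p < (Nat.fib (N - 1) : ℝ) / Nat.fib (N - 2)) ∨
  ((Nat.fib (N - 1) : ℝ) / Nat.fib (N - 2) < Real.log q / Real.log p ∧
    Real.log q / Real.log p < (Nat.fib N : ℝ) / Nat.fib (N - 1))

/-- `V_n`: vectors `x ∈ ℕ^N` (1-based entry `i` is `x ⟨i-1⟩`) with
`Σ x_i h_i = h_n` and `Σ x_i h_{i-1} = h_{n-1}`. -/
def Vset (N n : ℕ) : Set (Fin N → ℕ) :=
  {x | ∑ i, x i * Nat.fib ((i : ℕ) + 1) = Nat.fib n ∧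
       ∑ i, x i * Nat.fib (i : ℕ) = Nat.fib (n - 1)}

/-- The measure function `f_x(t) = (Σ_{i=1}^N x_i·max(h_i log p, h_{i-1} log q)^t)^{1/t}`. -/
noncomputable def fmeas (N p q : ℕ) (x : Fin N → ℕ) (t : ℝ) : ℝ :=
  (∑ i, (x i : ℝ) * mmax p q ((i : ℕ) + 1) ^ t) ^ (1 / t)

/-- `x_n(i)`: the vector whose (i−2)nd (1-based) entry is `h_{n+1−i}`, whose
(i−1)st entry is `h_{n+2−i}`, and whose other entries are 0.  (For `i = 2`, `n = 1`
this gives `x_1(2) = (1,0,…,0)`.) -/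
def xvec (N n i : ℕ) : Fin N → ℕ := fun j =>
  if (j : ℕ) + 3 = i then Nat.fib (n + 1 - i)
  else if (j : ℕ) + 2 = i then Nat.fib (n + 2 - i)
  else 0

/-- `S_n = {x_n(i) : 3 ≤ i ≤ n+1}` for `n ≥ 2`, and `S_1 = {x_1(2)}`. -/
def Sset (N n : ℕ) : Set (Fin N → ℕ) :=
  if n = 1 then {xvec N 1 2}
  else {x | ∃ i, 3 ≤ i ∧ i ≤ n + 1 ∧ x = xvec N n i}

/-- `z` is almost consecutive-free: `z_j·z_{j+1} ≠ 0` implies `z_i = 0` for all `i > j+1`. -/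
def ACF (N : ℕ) (z : Fin N → ℕ) : Prop :=
  ∀ (j : Fin N) (hj : (j : ℕ) + 1 < N),
    z j * z ⟨(j : ℕ) + 1, hj⟩ ≠ 0 → ∀ i : Fin N, (j : ℕ) + 1 < (i : ℕ) → z i = 0

/-- `C_n`: the almost consecutive-free elements of `V_n`. -/
def Cset (N n : ℕ) : Set (Fin N → ℕ) := {z ∈ Vset N n | ACF N z}

/-- A factorization of `z ∈ V_n`: a `K`-tuple `x` with `x k ∈ V_{idx k}`,
`1 ≤ idx k ≤ n`, and `z = Σ_k x k`. -/
def IsFactorization (N n : ℕ) (z : Fin N → ℕ) {K : ℕ}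
    (idx : Fin K → ℕ) (x : Fin K → Fin N → ℕ) : Prop :=
  (∀ k, 1 ≤ idx k ∧ idx k ≤ n ∧ x k ∈ Vset N (idx k)) ∧ z = ∑ k, x k

/-- A tuple is `S`-type if each component lies in `∪_{i=1}^n S_i`. -/
def STypeFac (N n : ℕ) {K : ℕ} (x : Fin K → Fin N → ℕ) : Prop :=
  ∀ k, ∃ i, 1 ≤ i ∧ i ≤ n ∧ x k ∈ Sset N i

/-- `z` is `S`-restricted: every non-trivial (i.e. `K ≠ 1`) factorization is `S`-type. -/
def SRestricted (N n : ℕ) (z : Fin N → ℕ) : Prop :=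
  ∀ (K : ℕ) (idx : Fin K → ℕ) (x : Fin K → Fin N → ℕ),
    IsFactorization N n z idx x → K ≠ 1 → STypeFac N n x

/-- `R_n`: the `S`-restricted elements of `C_n`. -/
def Rset (N n : ℕ) : Set (Fin N → ℕ) := {z ∈ Cset N n | SRestricted N n z}

/-- The infimum attaining set `U_x = {t > 0 : f_x(t) = min{f_y(t) : y ∈ V_j}}`. -/
def Uset (N p q j : ℕ) (x : Fin N → ℕ) : Set ℝ :=
  {t | 0 < t ∧ IsLeast ((fun y => fmeas N p q y t) '' Vset N j) (fmeas N p q x t)}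

/-- The shift map `λ((x_1,…,x_N)) = (0,x_1,…,x_{N-1})`. -/
def shiftMap (N : ℕ) (x : Fin N → ℕ) : Fin N → ℕ := fun j =>
  if (j : ℕ) = 0 then 0
  else x ⟨(j : ℕ) - 1, lt_of_le_of_lt (Nat.sub_le _ _) j.isLt⟩

/-! Write `a, b, c` for the three measures in the equation. The Fibonacci recurrence and
`max (x + y) (z + w) ≤ max x z + max y w` give `a ≤ b + c`, and (W) forces `log q < 2 log p`,
which makes `b` and `c` strictly smaller than `a`. Then `t ↦ (b/a)^t + (c/a)^t` is strictly
decreasing, at least `1` at `t = 1` and tends to `0`, so it takes the value `1` exactly once,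
at some `t ≥ 1`. -/

open Real Filter Topology

section RpowSum

variable {u v : ℝ}

theorem strictAnti_rpow_add_rpow (hu : 0 < u) (hu1 : u < 1) (hv : 0 < v) (hv1 : v < 1) :
    StrictAnti fun t : ℝ => u ^ t + v ^ t := fun _ _ h =>
  add_lt_add (rpow_lt_rpow_of_exponent_gt hu hu1 h) (rpow_lt_rpow_of_exponent_gt hv hv1 h)

theorem exists_one_le_rpow_add_rpow_eq_one (hu : 0 < u) (hu1 : u < 1) (hv : 0 < v) (hv1 : v < 1)
    (huv : 1 ≤ u + v) : ∃ t : ℝ, 1 ≤ t ∧ u ^ t + v ^ t = 1 := by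
  have hcont : Continuous fun t : ℝ => u ^ t + v ^ t :=
    (continuous_const.rpow continuous_id fun _ => Or.inl hu.ne').add
      (continuous_const.rpow continuous_id fun _ => Or.inl hv.ne')
  have htend : Tendsto (fun t : ℝ => u ^ t + v ^ t) atTop (𝓝 0) := by
    simpa using (tendsto_rpow_atTop_of_base_lt_one u (by linarith) hu1).add
      (tendsto_rpow_atTop_of_base_lt_one v (by linarith) hv1)
  obtain ⟨T, hT1, hT⟩ :=
    ((eventually_ge_atTop 1).and (htend.eventually_lt_const one_pos)).exists
  obtain ⟨t, ht, hteq⟩ :=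
    intermediate_value_Icc' hT1 hcont.continuousOn ⟨hT.le, by simpa using huv⟩
  exact ⟨t, ht.1, hteq⟩

end RpowSum

theorem rpow_eq_rpow_add_rpow_iff {a b c : ℝ} (ha : 0 < a) (hb : 0 ≤ b) (hc : 0 ≤ c) (s : ℝ) :
    a ^ s = b ^ s + c ^ s ↔ (b / a) ^ s + (c / a) ^ s = 1 := by
  rw [div_rpow hb ha.le, div_rpow hc ha.le, ← add_div,
    div_eq_one_iff_eq (rpow_pos_of_pos ha s).ne', eq_comm]

theorem exists_unique_pos_rpow_eq_rpow_add_rpow {a b c : ℝ} (hb : 0 < b) (hc : 0 < c)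
    (hba : b < a) (hca : c < a) (habc : a ≤ b + c) :
    ∃ t : ℝ, (0 < t ∧ a ^ t = b ^ t + c ^ t) ∧
      (∀ s : ℝ, 0 < s → a ^ s = b ^ s + c ^ s → s = t) ∧ 1 ≤ t := by
  have ha : 0 < a := hb.trans hba
  have hu : b / a < 1 := (div_lt_one ha).2 hba
  have hv : c / a < 1 := (div_lt_one ha).2 hca
  have hsum : 1 ≤ b / a + c / a := by rwa [← add_div, one_le_div ha]
  obtain ⟨t, ht1, ht⟩ :=
    exists_one_le_rpow_add_rpow_eq_one (div_pos hb ha) hu (div_pos hc ha) hv hsum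
  have hiff := rpow_eq_rpow_add_rpow_iff ha hb.le hc.le
  refine ⟨t, ⟨one_pos.trans_le ht1, (hiff t).2 ht⟩, fun s _ hs => ?_, ht1⟩
  exact (strictAnti_rpow_add_rpow (div_pos hb ha) hu (div_pos hc ha) hv).injective
    (((hiff s).1 hs).trans ht.symm)

theorem Nat.cast_fib_add_two {R : Type*} [AddCommMonoidWithOne R] (k : ℕ) :
    (Nat.fib (k + 2) : R) = Nat.fib (k + 1) + Nat.fib k := by
  rw [Nat.fib_add_two, Nat.cast_add]
  exact add_comm _ _

theorem Nat.fib_add_two_le_two_mul_fib_add_one (k : ℕ) :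
    Nat.fib (k + 2) ≤ 2 * Nat.fib (k + 1) := by
  rw [Nat.fib_add_two]
  linarith [Nat.fib_le_fib_succ (n := k)]

theorem CondW.log_lt_two_mul_log {N p q : ℕ} (hN : 3 ≤ N) (hp : 0 < log p) (hW : CondW N p q) :
    log q < 2 * log p := by
  have hratio (k : ℕ) : (Nat.fib (k + 2) : ℝ) / Nat.fib (k + 1) ≤ 2 :=
    div_le_of_le_mul₀ (Nat.cast_nonneg _) zero_le_two
      (by exact_mod_cast Nat.fib_add_two_le_two_mul_fib_add_one k)
  obtain ⟨m, rfl⟩ : ∃ m, N = m + 3 := ⟨N - 3, by omega⟩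
  have hlt : log q / log p < 2 := by
    rcases hW with ⟨_, h⟩ | ⟨_, h⟩
    · exact h.trans_le (hratio m)
    · exact h.trans_le (hratio (m + 1))
  linarith [(div_lt_iff₀ hp).1 hlt]

section Mmax

variable {p q : ℕ}

theorem mmax_succ (n : ℕ) :
    mmax p q (n + 1) = max (Nat.fib (n + 1) * log p) (Nat.fib n * log q) := by
  simp [mmax]

theorem mmax_add_three_le (m : ℕ) :
    mmax p q (m + 3) ≤ mmax p q (m + 2) + mmax p q (m + 1) := by
  simp only [mmax_succ]
  calc max (Nat.fib (m + 3) * log p) (Nat.fib (m + 2) * log q)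
      = max (Nat.fib (m + 2) * log p + Nat.fib (m + 1) * log p)
          (Nat.fib (m + 1) * log q + Nat.fib m * log q) := by
        congr 1 <;> rw [Nat.cast_fib_add_two, add_mul]
    _ ≤ _ := max_add_add_le_max_add_max

theorem mmax_succ_pos (hp : 0 < log p) (n : ℕ) : 0 < mmax p q (n + 1) := by
  rw [mmax_succ]
  exact lt_max_of_lt_left (mul_pos (by exact_mod_cast Nat.fib_pos.2 n.succ_pos) hp)

theorem mmax_le_mmax_succ (hp : 0 ≤ log p) (hq : 0 ≤ log q) (n : ℕ) :
    mmax p q n ≤ mmax p q (n + 1) := by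
  rw [mmax_succ]
  exact max_le_max
    (mul_le_mul_of_nonneg_right (by exact_mod_cast Nat.fib_le_fib_succ) hp)
    (mul_le_mul_of_nonneg_right (by exact_mod_cast Nat.fib_mono (n.sub_le 1)) hq)

theorem mmax_add_two_lt_mmax_add_three (hp : 0 < log p) (hqp : log q < 2 * log p) (m : ℕ) :
    mmax p q (m + 2) < mmax p q (m + 3) := by
  have h3 := Nat.cast_fib_add_two (R := ℝ) (m + 1)
  have h1 : (0 : ℝ) < Nat.fib (m + 1) := by exact_mod_cast Nat.fib_pos.2 m.succ_pos
  have h21 : (Nat.fib (m + 1) : ℝ) ≤ Nat.fib (m + 2) := by exact_mod_cast Nat.fib_le_fib_succ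
  have hle : (Nat.fib (m + 3) : ℝ) * log p ≤ mmax p q (m + 3) := by
    rw [mmax_succ]; exact le_max_left _ _
  rw [mmax_succ]
  refine max_lt ?_ ?_
  · nlinarith
  · nlinarith

end Mmax

theorem stmt0_general (N p q : ℕ) (hN : 3 ≤ N) (hp : p.Prime) (hq : q.Prime)
    (hW : CondW N p q) :
    ∀ n : ℕ, 3 ≤ n → n ≤ N + 1 →
      ∃ t : ℝ, (0 < t ∧ peq p q n t) ∧ (∀ s : ℝ, 0 < s → peq p q n s → s = t) ∧ 1 ≤ t := by
  have hlp : 0 < log p := log_pos (by exact_mod_cast hp.one_lt)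
  have hlq : 0 < log q := log_pos (by exact_mod_cast hq.one_lt)
  intro n hn _
  obtain ⟨m, rfl⟩ : ∃ m, n = m + 3 := ⟨n - 3, by omega⟩
  have hba := mmax_add_two_lt_mmax_add_three hlp (hW.log_lt_two_mul_log hN hlp) m
  have hcb := mmax_le_mmax_succ hlp.le hlq.le (m + 1)
  have hc := mmax_succ_pos (q := q) hlp m
  exact exists_unique_pos_rpow_eq_rpow_add_rpow (hc.trans_le hcb) hc hba (hcb.trans_lt hba)
    (mmax_add_three_le m)

/-- Proposition `UniqueIntersection`: for `N ≥ 3`, distinct primes `p, q`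
satisfying condition (W), and every `3 ≤ n ≤ N+1`, there is a unique positive real `t` with
`max(h_n log p, h_{n-1} log q)^t = max(h_{n-1} log p, h_{n-2} log q)^t + max(h_{n-2} log p, h_{n-3} log q)^t`,
and moreover `t ≥ 1`. -/
theorem stmt0 (N p q : ℕ) (hN : 3 ≤ N) (hp : p.Prime) (hq : q.Prime) (hpq : p ≠ q)
    (hW : CondW N p q) :
    ∀ n : ℕ, 3 ≤ n → n ≤ N + 1 →
      ∃ t : ℝ, (0 < t ∧ peq p q n t) ∧ (∀ s : ℝ, 0 < s → peq p q n s → s = t) ∧ 1 ≤ t :=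
  stmt0_general N p q hN hp hq hW
end

section
/- Let φ = (1+√5)/2. For every integer n ≥ 3 there exists a unique positive real number t such that max(h_n, φ·h_{n−1})^t = max(h_{n−1}, φ·h_{n−2})^t + max(h_{n−2}, φ·h_{n−3})^t, and moreover this t satisfies t ≥ 1. -/
open Real

/-!
Dividing by the left-hand side turns the equation into `b ^ t + c ^ t = 1` with `0 < b, c < 1`.
The left side is strictly decreasing in `t`, tends to `0`, and is at least `1` at `t = 1`
(this is `g n ≤ g (n - 1) + g (n - 2)` for `g n = max(h_n, φ h_{n-1})`, obtained by applying the
Fibonacci recursion to both entries of the max), so it has exactly one root, which is `≥ 1`.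
That `0 < b, c < 1` amounts to `g` being strictly increasing, which uses `1 < φ < 2`.
-/

open Filter Topology

lemma strictAnti_rpow_add_rpow_s1 {b c : ℝ} (hb₀ : 0 < b) (hb₁ : b < 1) (hc₀ : 0 < c) (hc₁ : c < 1) :
    StrictAnti fun t : ℝ => b ^ t + c ^ t := fun _ _ hst =>
  add_lt_add (Real.rpow_lt_rpow_of_exponent_gt hb₀ hb₁ hst)
    (Real.rpow_lt_rpow_of_exponent_gt hc₀ hc₁ hst)

lemma exists_one_le_rpow_add_rpow_eq_one_s1 {b c : ℝ} (hb₀ : 0 < b) (hb₁ : b < 1) (hc₀ : 0 < c)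
    (hc₁ : c < 1) (hbc : 1 ≤ b + c) : ∃ t : ℝ, 1 ≤ t ∧ b ^ t + c ^ t = 1 := by
  have hcont : Continuous fun t : ℝ => b ^ t + c ^ t :=
    (continuous_const.rpow continuous_id fun _ => .inl hb₀.ne').add
      (continuous_const.rpow continuous_id fun _ => .inl hc₀.ne')
  have hlim : Tendsto (fun t : ℝ => b ^ t + c ^ t) atTop (𝓝 0) := by
    simpa using (tendsto_rpow_atTop_of_base_lt_one b (by linarith) hb₁).add
      (tendsto_rpow_atTop_of_base_lt_one c (by linarith) hc₁)
  obtain ⟨T, hT1, hT⟩ := ((hlim.eventually_lt_const one_pos).and (eventually_ge_atTop 1)).exists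
  obtain ⟨t, ht, hteq⟩ := intermediate_value_Icc' hT hcont.continuousOn
    (show (1 : ℝ) ∈ Set.Icc _ _ from ⟨hT1.le, by simpa using hbc⟩)
  exact ⟨t, ht.1, hteq⟩

lemma rpow_eq_rpow_add_rpow_iff_s1 {A B C : ℝ} (hA : 0 < A) (hB : 0 ≤ B) (hC : 0 ≤ C) (t : ℝ) :
    A ^ t = B ^ t + C ^ t ↔ (B / A) ^ t + (C / A) ^ t = 1 := by
  rw [Real.div_rpow hB hA.le, Real.div_rpow hC hA.le, ← add_div,
    div_eq_one_iff_eq (Real.rpow_pos_of_pos hA t).ne', eq_comm]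

theorem exists_unique_rpow_eq_rpow_add_rpow {A B C : ℝ} (hB : 0 < B) (hC : 0 < C) (hBA : B < A)
    (hCA : C < A) (hABC : A ≤ B + C) :
    ∃ t : ℝ, 1 ≤ t ∧ A ^ t = B ^ t + C ^ t ∧ ∀ s, A ^ s = B ^ s + C ^ s → s = t := by
  have hA : 0 < A := hB.trans hBA
  have hb₀ : 0 < B / A := div_pos hB hA
  have hc₀ : 0 < C / A := div_pos hC hA
  have hb₁ : B / A < 1 := (div_lt_one hA).2 hBA
  have hc₁ : C / A < 1 := (div_lt_one hA).2 hCA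
  simp only [rpow_eq_rpow_add_rpow_iff_s1 hA hB.le hC.le]
  obtain ⟨t, ht, hteq⟩ := exists_one_le_rpow_add_rpow_eq_one_s1 hb₀ hb₁ hc₀ hc₁
    (by rwa [← add_div, one_le_div hA])
  exact ⟨t, ht, hteq, fun s hs =>
    (strictAnti_rpow_add_rpow_s1 hb₀ hb₁ hc₀ hc₁).injective (hs.trans hteq.symm)⟩

lemma gmax_succ (k : ℕ) : gmax (k + 1) = max (Nat.fib (k + 1) : ℝ) (phiR * Nat.fib k) := rfl

lemma gmax_strictMono : StrictMono gmax := by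
  refine strictMono_nat_of_lt_succ fun k => ?_
  cases k with
  | zero => simp [gmax]
  | succ k =>
    have hφ₁ : 1 < phiR := Real.one_lt_goldenRatio
    have hφ₂ : phiR < 2 := Real.goldenRatio_lt_two
    have hpos : (0 : ℝ) < Nat.fib (k + 1) := by exact_mod_cast Nat.fib_pos.2 k.succ_pos
    have hmono : (Nat.fib k : ℝ) ≤ Nat.fib (k + 1) := by exact_mod_cast Nat.fib_le_fib_succ
    have hrec : (Nat.fib (k + 2) : ℝ) = Nat.fib k + Nat.fib (k + 1) := by
      exact_mod_cast Nat.fib_add_two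
    rw [gmax_succ, gmax_succ, max_lt_iff]
    constructor
    · exact lt_max_of_lt_right (by nlinarith)
    · exact lt_max_of_lt_left (by nlinarith)

lemma gmax_pos {k : ℕ} (hk : 1 ≤ k) : 0 < gmax k :=
  (show gmax 0 = 0 by simp [gmax]) ▸ gmax_strictMono (by omega)

lemma gmax_add_three_le (k : ℕ) : gmax (k + 3) ≤ gmax (k + 2) + gmax (k + 1) := by
  have hfib (j : ℕ) : (Nat.fib (j + 2) : ℝ) = Nat.fib (j + 1) + Nat.fib j := by
    exact_mod_cast Nat.fib_add_two.trans (add_comm _ _)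
  rw [gmax_succ, gmax_succ, gmax_succ, hfib (k + 1), hfib k, mul_add]
  exact max_add_add_le_max_add_max

/-- Lemma `TargetUniqueIntersection`: for every `n ≥ 3` there is a unique
positive real `t` with `max(h_n, φ h_{n-1})^t = max(h_{n-1}, φ h_{n-2})^t + max(h_{n-2}, φ h_{n-3})^t`,
and moreover `t ≥ 1`. -/
theorem stmt1 (n : ℕ) (hn : 3 ≤ n) :
    ∃ t : ℝ, (0 < t ∧ geq n t) ∧ (∀ s : ℝ, 0 < s → geq n s → s = t) ∧ 1 ≤ t := by
  obtain ⟨k, rfl⟩ : ∃ k, n = k + 3 := ⟨n - 3, by omega⟩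
  obtain ⟨t, ht, hteq, huniq⟩ := exists_unique_rpow_eq_rpow_add_rpow (gmax_pos (by omega))
    (gmax_pos (by omega)) (gmax_strictMono (by omega)) (gmax_strictMono (by omega))
    (gmax_add_three_le k)
  exact ⟨t, ⟨by linarith, hteq⟩, fun s _ hs => huniq s hs, ht⟩
end

section
/- For every integer n ≥ 3, s_n > s_{n+1}; that is, the sequence of unique positive solutions s_n of the equations max(h_n, φ·h_{n−1})^{s} = max(h_{n−1}, φ·h_{n−2})^{s} + max(h_{n−2}, φ·h_{n−3})^{s} is strictly decreasing in n. -/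
open Real

lemma phiR_gt : 3/2 < phiR := by
  have h : (2:ℝ) < Real.sqrt 5 := by
    rw [show (2:ℝ) = Real.sqrt 4 by rw [show (4:ℝ) = 2^2 by norm_num, Real.sqrt_sq]; norm_num]
    exact Real.sqrt_lt_sqrt (by norm_num) (by norm_num)
  unfold phiR; linarith

lemma phiR_pos : 0 < phiR := by linarith [phiR_gt]

lemma one_lt_phiR : 1 < phiR := by linarith [phiR_gt]

lemma phiR_sq : phiR ^ 2 = phiR + 1 := by
  have h : Real.sqrt 5 ^ 2 = 5 := Real.sq_sqrt (by norm_num)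
  unfold phiR; nlinarith [h]

lemma phiR_inv : phiR⁻¹ = phiR - 1 := by
  have h := phiR_sq
  have h0 := phiR_pos
  field_simp
  nlinarith

lemma fib_phi (k : ℕ) : (Nat.fib (k+1) : ℝ) = phiR * Nat.fib k + (-phiR⁻¹)^k := by
  induction k with
  | zero => simp
  | succ k ih =>
    rw [show k+1+1 = k+2 from rfl, Nat.fib_add_two]
    push_cast
    rw [ih, pow_succ, phiR_inv]
    have h := phiR_sq
    ring_nf
    nlinarith [h]

lemma phiR_lt2 : phiR < 2 := by
  have h : Real.sqrt 5 < 3 := by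
    rw [show (3:ℝ) = Real.sqrt 9 by
      rw [show (9:ℝ) = 3^2 by norm_num, Real.sqrt_sq]; norm_num]
    exact Real.sqrt_lt_sqrt (by norm_num) (by norm_num)
  unfold phiR; linarith

lemma inv_phiR_pos : 0 < phiR⁻¹ := inv_pos.2 phiR_pos

lemma fib_phi_even (m : ℕ) :
    (Nat.fib (2*m+1) : ℝ) = phiR * Nat.fib (2*m) + (phiR⁻¹)^(2*m) := by
  have h := fib_phi (2*m)
  rwa [Even.neg_pow ⟨m, by ring⟩] at h

lemma fib_phi_odd (m : ℕ) :
    (Nat.fib (2*m+2) : ℝ) = phiR * Nat.fib (2*m+1) - (phiR⁻¹)^(2*m+1) := by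
  have h := fib_phi (2*m+1)
  rwa [Odd.neg_pow ⟨m, by ring⟩, ← sub_eq_add_neg] at h

lemma gmax_odd (m : ℕ) : gmax (2*m+1) = (Nat.fib (2*m+1) : ℝ) := by
  unfold gmax
  rw [show 2*m+1-1 = 2*m by omega]
  refine max_eq_left ?_
  rw [fib_phi_even m]
  have := pow_pos inv_phiR_pos (2*m)
  linarith

lemma gmax_even (m : ℕ) : gmax (2*m+2) = phiR * (Nat.fib (2*m+1) : ℝ) := by
  unfold gmax
  rw [show 2*m+2-1 = 2*m+1 by omega]
  refine max_eq_right ?_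
  rw [fib_phi_odd m]
  have := pow_pos inv_phiR_pos (2*m+1)
  linarith

lemma fib_pos_cast (k : ℕ) (hk : 1 ≤ k) : (0:ℝ) < (Nat.fib k : ℝ) := by
  exact_mod_cast Nat.fib_pos.2 hk

lemma gmax_lt_succ (n : ℕ) (hn : 1 ≤ n) : gmax n < gmax (n+1) := by
  rcases Nat.even_or_odd n with ⟨m, hm⟩ | ⟨m, hm⟩
  · -- n = 2m, m ≥ 1, write n = 2(m-1)+2
    obtain ⟨j, rfl⟩ : ∃ j, n = 2*j+2 := ⟨m-1, by omega⟩
    rw [gmax_even j, show 2*j+2+1 = 2*(j+1)+1 by ring, gmax_odd (j+1)]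
    rw [show 2*(j+1)+1 = 2*j+3 by ring]
    have h1 : (Nat.fib (2*j+3) : ℝ) = phiR * Nat.fib (2*j+2) + (phiR⁻¹)^(2*j+2) := by
      have := fib_phi_even (j+1); rw [show 2*(j+1) = 2*j+2 by ring] at this; exact this
    have h2 : (Nat.fib (2*j+1) : ℝ) ≤ (Nat.fib (2*j+2) : ℝ) := by
      exact_mod_cast Nat.fib_le_fib_succ
    have h3 := pow_pos inv_phiR_pos (2*j+2)
    nlinarith [phiR_pos]
  · -- n = 2m+1
    obtain rfl : n = 2*m+1 := hm
    rw [gmax_odd m, show 2*m+1+1 = 2*m+2 by ring, gmax_even m]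
    have h := fib_pos_cast (2*m+1) (by omega)
    nlinarith [one_lt_phiR]

lemma gmax_pos_s2 (n : ℕ) (hn : 1 ≤ n) : 0 < gmax n :=
  lt_of_lt_of_le (fib_pos_cast n hn) (le_max_left _ _)

lemma t_gt_one {a b c t : ℝ} (ha : 0 < a) (hb : 0 < b) (hc : 0 < c)
    (hac : a < c) (hbc : b < c) (habc : c < a + b) (ht : 0 < t)
    (heq : c ^ t = b ^ t + a ^ t) : 1 < t := by
  by_contra h
  push_neg at h
  have h1 : a / c ≤ (a/c)^t := by
    have := Real.rpow_le_rpow_of_exponent_ge (div_pos ha hc)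
      (le_of_lt ((div_lt_one hc).2 hac)) h
    rwa [Real.rpow_one] at this
  have h2 : b / c ≤ (b/c)^t := by
    have := Real.rpow_le_rpow_of_exponent_ge (div_pos hb hc)
      (le_of_lt ((div_lt_one hc).2 hbc)) h
    rwa [Real.rpow_one] at this
  have hct : (0:ℝ) < c ^ t := Real.rpow_pos_of_pos hc t
  have h3 : (a/c)^t + (b/c)^t = 1 := by
    rw [Real.div_rpow ha.le hc.le, Real.div_rpow hb.le hc.le, ← add_div,
      show a ^ t + b ^ t = c ^ t by linarith, div_self (ne_of_gt hct)]
  have h4 : (1:ℝ) < a/c + b/c := by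
    rw [← add_div]
    exact (one_lt_div hc).2 habc
  linarith

set_option maxHeartbeats 1000000 in
lemma even_key (b ε t : ℝ) (hb : 2 ≤ b) (hε : 0 < ε) (hε1 : phiR^4 * ε ≤ 1) (ht : 0 < t)
    (heq : (phiR*b)^t = b^t + ((b + phiR^3*ε)/phiR)^t) :
    (phiR*b)^t + b^t < (phiR^2*b - phiR*ε)^t := by
  have hφ := phiR_sq
  have hφp := phiR_pos
  have hφ1 := one_lt_phiR
  have hφg := phiR_gt
  have hφ3 : phiR^3 = 2*phiR + 1 := by nlinarith [hφ]
  have hφ4 : phiR^4 = 3*phiR + 2 := by nlinarith [hφ, hφ3]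
  have hbp : (0:ℝ) < b := by linarith
  have hε3 : phiR^3 * ε < 1 := by nlinarith
  have hεb : ε < b := by nlinarith
  -- positivity of the three bases
  have hA : 0 < (b + phiR^3*ε)/phiR := by positivity
  have hC : 0 < phiR * b := by positivity
  have hD : 0 < phiR^2*b - phiR*ε := by nlinarith
  -- t > 1
  have ht1 : 1 < t := by
    refine t_gt_one hA hbp hC ?_ ?_ ?_ ht heq
    · rw [div_lt_iff₀ hφp]; nlinarith
    · nlinarith
    · rw [div_add' _ _ _ (ne_of_gt hφp)]
      rw [lt_div_iff₀ hφp]; nlinarith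
  -- w and the normalized equation
  set w : ℝ := (b + phiR^3*ε)/(phiR*b) with hw
  clear_value w
  have hwpos : 0 < w := by rw [hw]; positivity
  have hwlt : w < 1 := by
    rw [hw, div_lt_one hC]; nlinarith
  have hbt : (0:ℝ) < b ^ t := Real.rpow_pos_of_pos hbp t
  have hwb : (b + phiR^3*ε)/phiR = w * b := by rw [hw]; field_simp
  set X : ℝ := phiR ^ t with hX
  clear_value X
  have heq' : X = 1 + w ^ t := by
    have e1 : (phiR*b)^t = X * b^t := by rw [hX]; exact Real.mul_rpow hφp.le hbp.le
    have e2 : ((b + phiR^3*ε)/phiR)^t = w^t * b^t := by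
      rw [hwb, Real.mul_rpow hwpos.le hbp.le]
    rw [e1, e2] at heq
    refine mul_right_cancel₀ (ne_of_gt hbt) ?_
    rw [add_mul, one_mul]
    linarith
  have hXgt : phiR < X := by
    rw [hX]
    have := Real.rpow_lt_rpow_of_exponent_lt hφ1 ht1
    rwa [Real.rpow_one] at this
  have hwt1 : w ^ t < 1 := Real.rpow_lt_one hwpos.le hwlt ht
  have hX2 : X < 2 := by rw [heq']; linarith
  have hXpos : 0 < X := by linarith
  -- t < 3/2
  have ht32 : t < 3/2 := by
    by_contra hcon
    push_neg at hcon
    have h1 : phiR ^ ((3:ℝ)/2) ≤ X := by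
      rw [hX]; exact Real.rpow_le_rpow_of_exponent_le hφ1.le hcon
    have h2 : (phiR ^ ((3:ℝ)/2))^2 = phiR^3 := by
      rw [← Real.rpow_natCast (phiR ^ ((3:ℝ)/2)) 2, ← Real.rpow_mul hφp.le,
        ← Real.rpow_natCast phiR 3]
      norm_num
    have h3 : 0 < phiR ^ ((3:ℝ)/2) := Real.rpow_pos_of_pos hφp _
    have h4 : 2 < phiR ^ ((3:ℝ)/2) := by nlinarith
    linarith
  -- U and v
  set U : ℝ := (b + phiR^3*ε)/b with hU
  clear_value U
  set v : ℝ := (phiR*b - ε)/(phiR*b) with hv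
  clear_value v
  have hε3b : phiR^3 * ε < b := by linarith
  have hU1 : 1 < U := by rw [hU, one_lt_div hbp]; nlinarith
  have hvpos : 0 < v := by
    rw [hv]; exact div_pos (by nlinarith) hC
  have hvlt : v < 1 := by rw [hv, div_lt_one hC]; nlinarith
  have hUv : phiR * w = U := by rw [hw, hU]; field_simp
  have hUt : U ^ t = X * w ^ t := by
    rw [← hUv, Real.mul_rpow hφp.le hwpos.le, ← hX]
  have hDv : phiR^2*b - phiR*ε = (phiR^2 * b) * v := by
    rw [hv]; field_simp
  have hDt : (phiR^2*b - phiR*ε)^t = X^2 * (v^t * b^t) := by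
    rw [hDv, Real.mul_rpow (by positivity) (by positivity),
        Real.mul_rpow (by positivity) hbp.le]
    have hsq : (phiR^2 : ℝ) ^ t = X^2 := by
      rw [hX, ← Real.rpow_natCast phiR 2, ← Real.rpow_mul hφp.le, mul_comm ((2:ℕ):ℝ) t,
          Real.rpow_mul hφp.le, Real.rpow_natCast]
    rw [hsq]; ring
  -- key inequalities
  have c3 : 3 * (1 - v) ≤ U * v - 1 := by
    have e1 : (1:ℝ) + 3 * (1 - v) = (phiR*b^2 + 3*ε*b) / (phiR*b^2) := by
      rw [hv]; field_simp; ring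
    have e2 : U * v = ((b+phiR^3*ε)*(phiR*b-ε)) / (phiR*b^2) := by
      rw [hU, hv, div_mul_div_comm, show b*(phiR*b) = phiR*b^2 by ring]
    have e3 : (phiR*b^2 + 3*ε*b) / (phiR*b^2) ≤ ((b+phiR^3*ε)*(phiR*b-ε)) / (phiR*b^2) := by
      rw [div_le_div_iff_of_pos_right (by positivity)]
      have h52 : (5/2:ℝ) ≤ phiR^4 - 4 := by nlinarith
      have h5 : (5/2:ℝ)*2 ≤ (phiR^4 - 4) * b := mul_le_mul h52 hb (by norm_num) (by linarith)
      have hpos : (0:ℝ) < phiR^4*b - 4*b - phiR^3*ε := by nlinarith [h5, hε3]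
      nlinarith [mul_pos hε hpos]
    linarith
  have hUvgt : 1 ≤ U * v := by linarith [c3, hvlt]
  have hUvt : U * v ≤ (U*v) ^ t := by
    have := Real.rpow_le_rpow_of_exponent_le hUvgt ht1.le
    rwa [Real.rpow_one] at this
  have hBern : 1 + t * (v - 1) ≤ v ^ t := by
    have h := one_add_mul_self_le_rpow_one_add (s := v - 1) (by linarith) ht1.le
    rw [show (1:ℝ) + (v - 1) = v by ring] at h
    exact h
  have hvt_pos : 0 < v ^ t := Real.rpow_pos_of_pos hvpos t
  have hvt_lt : v ^ t < 1 := Real.rpow_lt_one hvpos.le hvlt ht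
  -- chain: X*(1 - v^t) ≤ X*t*(1-v) < 3*(1-v) ≤ U*v - 1 ≤ (U*v)^t - 1
  have c1 : X * (1 - v^t) ≤ X * t * (1 - v) := by
    linarith [mul_nonneg hXpos.le (show (0:ℝ) ≤ t*(1-v) - (1 - v^t) by linarith [hBern])]
  have hXt : X * t < 3 := by linarith [mul_lt_mul'' hX2 ht32 hXpos.le ht.le]
  have c2 : X * t * (1 - v) < 3 * (1 - v) := by
    linarith [mul_pos (show (0:ℝ) < 3 - X*t by linarith) (show (0:ℝ) < 1 - v by linarith)]
  have c4 : U * v - 1 ≤ (U*v)^t - 1 := by linarith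
  have hfinal : X * (1 - v^t) < (U*v)^t - 1 := by linarith
  -- assemble
  have hUvt' : (U*v)^t = U^t * v^t := Real.mul_rpow (by linarith) hvpos.le
  have goal' : X + 1 < X^2 * v^t := by
    have hX2eq : X^2 = X + U^t := by rw [hUt, heq']; ring
    rw [hX2eq, add_mul, ← hUvt']
    linarith [hfinal]
  calc (phiR*b)^t + b^t = (X + 1) * b^t := by
        rw [Real.mul_rpow hφp.le hbp.le, ← hX]; ring
    _ < (X^2 * v^t) * b^t := mul_lt_mul_of_pos_right goal' hbt
    _ = (phiR^2*b - phiR*ε)^t := by rw [hDt]; ring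

lemma key_ineq (n : ℕ) (hn : 3 ≤ n) (t : ℝ) (ht : 0 < t)
    (heq : gmax n ^ t = gmax (n-1) ^ t + gmax (n-2) ^ t) :
    gmax n ^ t + gmax (n-1) ^ t < gmax (n+1) ^ t := by
  have hφp := phiR_pos
  have hφ1 := one_lt_phiR
  have hφs := phiR_sq
  rcases Nat.even_or_odd n with he | ho
  · -- n even, n = 2k+4
    obtain ⟨m, hm⟩ := he
    obtain ⟨k, rfl⟩ : ∃ k, n = 2*k+4 := ⟨(n-4)/2, by omega⟩
    have gA : gmax (2*k+2) = phiR * (Nat.fib (2*k+1) : ℝ) := gmax_even k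
    have gB : gmax (2*k+3) = (Nat.fib (2*k+3) : ℝ) := by
      have := gmax_odd (k+1); rw [show 2*(k+1)+1 = 2*k+3 by ring] at this; exact this
    have gC : gmax (2*k+4) = phiR * (Nat.fib (2*k+3) : ℝ) := by
      have := gmax_even (k+1); rw [show 2*(k+1)+2 = 2*k+4 by ring,
        show 2*(k+1)+1 = 2*k+3 by ring] at this; exact this
    have gD : gmax (2*k+5) = (Nat.fib (2*k+5) : ℝ) := by
      have := gmax_odd (k+2); rw [show 2*(k+2)+1 = 2*k+5 by ring] at this; exact this
    rw [show 2*k+4-1 = 2*k+3 by omega, show 2*k+4-2 = 2*k+2 by omega] at heq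
    rw [show 2*k+4-1 = 2*k+3 by omega, show 2*k+4+1 = 2*k+5 by omega]
    rw [gC, gB, gA] at heq
    rw [gC, gB, gD]
    set b : ℝ := (Nat.fib (2*k+3) : ℝ) with hbdef
    set ε : ℝ := (phiR⁻¹)^(2*k+4) with hεdef
    have hcan : phiR * phiR⁻¹ = 1 := mul_inv_cancel₀ (ne_of_gt phiR_pos)
    have p1 : phiR^3 * ε = (phiR⁻¹)^(2*k+1) := by
      rw [hεdef, show 2*k+4 = (2*k+1)+3 by ring, pow_add,
        mul_comm ((phiR⁻¹) ^ (2*k+1)) ((phiR⁻¹)^3), ← mul_assoc, ← mul_pow, hcan,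
        one_pow, one_mul]
    have p2 : phiR^2 * ε = (phiR⁻¹)^(2*k+2) := by
      rw [hεdef, show 2*k+4 = (2*k+2)+2 by ring, pow_add,
        mul_comm ((phiR⁻¹) ^ (2*k+2)) ((phiR⁻¹)^2), ← mul_assoc, ← mul_pow, hcan,
        one_pow, one_mul]
    have p3 : phiR * ε = (phiR⁻¹)^(2*k+3) := by
      rw [hεdef, show 2*k+4 = (2*k+3)+1 by ring, pow_add,
        mul_comm ((phiR⁻¹) ^ (2*k+3)) ((phiR⁻¹)^1), ← mul_assoc, pow_one, hcan, one_mul]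
    have f1 : (Nat.fib (2*k+2):ℝ) = phiR * Nat.fib (2*k+1) - phiR^3*ε := by
      rw [p1]; exact fib_phi_odd k
    have f2 : b = phiR * Nat.fib (2*k+2) + phiR^2*ε := by
      rw [p2, hbdef]
      have := fib_phi_even (k+1); rw [show 2*(k+1)+1 = 2*k+3 by ring,
        show 2*(k+1) = 2*k+2 by ring] at this; exact this
    have f3 : (Nat.fib (2*k+4):ℝ) = phiR * b - phiR*ε := by
      rw [p3, hbdef]
      have := fib_phi_odd (k+1); rw [show 2*(k+1)+2 = 2*k+4 by ring,
        show 2*(k+1)+1 = 2*k+3 by ring] at this; exact this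
    have f4 : (Nat.fib (2*k+5):ℝ) = phiR * Nat.fib (2*k+4) + ε := by
      rw [hεdef]
      have := fib_phi_even (k+2); rw [show 2*(k+2)+1 = 2*k+5 by ring,
        show 2*(k+2) = 2*k+4 by ring] at this; exact this
    have hε : 0 < ε := pow_pos inv_phiR_pos _
    have hb2 : (2:ℝ) ≤ b := by
      rw [hbdef]
      have : Nat.fib 3 ≤ Nat.fib (2*k+3) := Nat.fib_mono (by omega)
      have h3 : Nat.fib 3 = 2 := by decide
      exact_mod_cast h3 ▸ this
    have hε1 : phiR^4 * ε ≤ 1 := by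
      have h4 : phiR^4 * ε = (phiR⁻¹)^(2*k) := by
        rw [hεdef, show 2*k+4 = (2*k)+4 by ring, pow_add,
          mul_comm ((phiR⁻¹) ^ (2*k)) ((phiR⁻¹)^4), ← mul_assoc, ← mul_pow, hcan,
          one_pow, one_mul]
      rw [h4]
      apply pow_le_one₀ inv_phiR_pos.le
      rw [phiR_inv]; linarith [phiR_lt2]
    have key_b : phiR * (Nat.fib (2*k+1):ℝ) = (b + phiR^3*ε)/phiR := by
      rw [eq_div_iff (ne_of_gt phiR_pos), f2, f1]
      ring_nf
      linear_combination (ε * phiR^2) * phiR_sq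
    have key_d : (Nat.fib (2*k+5):ℝ) = phiR^2 * b - phiR * ε := by
      rw [f4, f3]
      linear_combination (-ε) * phiR_sq
    rw [key_b] at heq
    rw [key_d]
    exact even_key b ε t hb2 hε hε1 ht heq
  · -- n odd, n = 2k+3
    obtain ⟨m, hm⟩ := ho
    obtain ⟨k, rfl⟩ : ∃ k, n = 2*k+3 := ⟨(n-3)/2, by omega⟩
    have gA : gmax (2*k+1) = (Nat.fib (2*k+1) : ℝ) := gmax_odd k
    have gB : gmax (2*k+2) = phiR * (Nat.fib (2*k+1) : ℝ) := gmax_even k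
    have gC : gmax (2*k+3) = (Nat.fib (2*k+3) : ℝ) := by
      have := gmax_odd (k+1); rw [show 2*(k+1)+1 = 2*k+3 by ring] at this; exact this
    have gD : gmax (2*k+4) = phiR * (Nat.fib (2*k+3) : ℝ) := by
      have := gmax_even (k+1); rw [show 2*(k+1)+2 = 2*k+4 by ring,
        show 2*(k+1)+1 = 2*k+3 by ring] at this; exact this
    rw [show 2*k+3-1 = 2*k+2 by omega, show 2*k+3-2 = 2*k+1 by omega] at heq
    rw [show 2*k+3-1 = 2*k+2 by omega, show 2*k+3+1 = 2*k+4 by omega]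
    rw [gC, gB, gA] at heq
    rw [gC, gB, gD]
    set a : ℝ := (Nat.fib (2*k+1) : ℝ) with hadef
    set c : ℝ := (Nat.fib (2*k+3) : ℝ) with hcdef
    have ha : 0 < a := fib_pos_cast _ (by omega)
    have hc : 0 < c := fib_pos_cast _ (by omega)
    have f1 : (Nat.fib (2*k+2):ℝ) = phiR * a - (phiR⁻¹)^(2*k+1) := fib_phi_odd k
    have f2 : c = phiR * Nat.fib (2*k+2) + (phiR⁻¹)^(2*k+2) := by
      rw [hcdef]
      have := fib_phi_even (k+1); rw [show 2*(k+1)+1 = 2*k+3 by ring,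
        show 2*(k+1) = 2*k+2 by ring] at this; exact this
    have hmono : (Nat.fib (2*k+1):ℝ) ≤ (Nat.fib (2*k+2):ℝ) := by
      exact_mod_cast Nat.fib_mono (by omega)
    have he2 : (0:ℝ) < (phiR⁻¹)^(2*k+2) := pow_pos inv_phiR_pos _
    have he1 : (0:ℝ) < (phiR⁻¹)^(2*k+1) := pow_pos inv_phiR_pos _
    have hpow : (phiR⁻¹)^(2*k+2) = (phiR⁻¹)^(2*k+1) * phiR⁻¹ := by rw [pow_succ]
    have hBC : phiR * a < c := by
      rw [f2]
      have : phiR * a ≤ phiR * (Nat.fib (2*k+2):ℝ) := by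
        apply mul_le_mul_of_nonneg_left hmono hφp.le
      linarith
    have hCsum : c < a + phiR * a := by
      rw [f2, f1]
      have hinv : phiR⁻¹ < phiR := by
        rw [phiR_inv]; linarith [phiR_gt]
      have : (phiR⁻¹)^(2*k+1) * phiR⁻¹ < (phiR⁻¹)^(2*k+1) * phiR :=
        mul_lt_mul_of_pos_left hinv he1
      nlinarith [phiR_sq]
    have ht1 : 1 < t := by
      refine t_gt_one ha (mul_pos hφp ha) hc ?_ hBC hCsum ht heq
      nlinarith
    have hXgt : phiR < phiR ^ t := by
      have := Real.rpow_lt_rpow_of_exponent_lt hφ1 ht1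
      rwa [Real.rpow_one] at this
    have hat : (0:ℝ) < a ^ t := Real.rpow_pos_of_pos ha t
    have e1 : (phiR*a)^t = phiR^t * a^t := Real.mul_rpow hφp.le ha.le
    have e2 : (phiR*c)^t = phiR^t * c^t := Real.mul_rpow hφp.le hc.le
    rw [e1] at heq
    rw [e1, e2]
    have hq : (0:ℝ) < (phiR^t - phiR) * (phiR^t + phiR - 1) := by
      apply mul_pos (by linarith)
      have : (0:ℝ) < phiR ^ t := Real.rpow_pos_of_pos hφp t
      linarith [phiR_gt]
    have hq2 : (0:ℝ) < ((phiR^t - phiR) * (phiR^t + phiR - 1)) * a^t := mul_pos hq hat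
    have hsq' : phiR^2 * a^t = (phiR+1) * a^t := by rw [phiR_sq]
    have heqX : phiR^t * c^t = phiR^t * (phiR^t * a^t) + phiR^t * a^t := by
      rw [heq]; ring
    linarith [hq2, hsq', heqX, heq]

/-- Lemma `TargetCompatible`: the unique positive solutions `s_n` of
`max(h_n, φ h_{n-1})^s = max(h_{n-1}, φ h_{n-2})^s + max(h_{n-2}, φ h_{n-3})^s` satisfy
`s_n > s_{n+1}` for all `n ≥ 3`. -/
theorem stmt2 (s : ℕ → ℝ) (hs : ∀ n : ℕ, 3 ≤ n → 0 < s n ∧ geq n (s n)) :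
    ∀ n : ℕ, 3 ≤ n → s (n + 1) < s n := by
  intro n hn
  obtain ⟨ht0, hteq⟩ := hs n hn
  obtain ⟨ht0', hteq'⟩ := hs (n+1) (by omega)
  unfold geq at hteq hteq'
  rw [show n+1-1 = n by omega, show n+1-2 = n-1 by omega] at hteq'
  have key := key_ineq n hn (s n) ht0 hteq
  by_contra hcon
  push_neg at hcon
  have hB : 0 < gmax (n-1) := gmax_pos_s2 _ (by omega)
  have hC : 0 < gmax n := gmax_pos_s2 _ (by omega)
  have hD : 0 < gmax (n+1) := gmax_pos_s2 _ (by omega)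
  have hCD : gmax n < gmax (n+1) := gmax_lt_succ n (by omega)
  have hBD : gmax (n-1) < gmax (n+1) := by
    have h1 := gmax_lt_succ (n-1) (by omega)
    rw [show n-1+1 = n by omega] at h1
    linarith
  have hDt : (0:ℝ) < gmax (n+1) ^ (s (n+1)) := Real.rpow_pos_of_pos hD _
  have hDt2 : (0:ℝ) < gmax (n+1) ^ (s n) := Real.rpow_pos_of_pos hD _
  have e1 : (gmax n / gmax (n+1)) ^ (s (n+1)) + (gmax (n-1) / gmax (n+1)) ^ (s (n+1)) = 1 := by
    rw [Real.div_rpow hC.le hD.le, Real.div_rpow hB.le hD.le, ← add_div,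
      ← hteq', div_self (ne_of_gt hDt)]
  have e2 : (gmax n / gmax (n+1)) ^ (s n) + (gmax (n-1) / gmax (n+1)) ^ (s n) < 1 := by
    rw [Real.div_rpow hC.le hD.le, Real.div_rpow hB.le hD.le, ← add_div,
      div_lt_one hDt2]
    linarith [key]
  have m1 : (gmax n / gmax (n+1)) ^ (s (n+1)) ≤ (gmax n / gmax (n+1)) ^ (s n) :=
    Real.rpow_le_rpow_of_exponent_ge (div_pos hC hD) ((div_le_one hD).2 hCD.le) hcon
  have m2 : (gmax (n-1) / gmax (n+1)) ^ (s (n+1)) ≤ (gmax (n-1) / gmax (n+1)) ^ (s n) :=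
    Real.rpow_le_rpow_of_exponent_ge (div_pos hB hD) ((div_le_one hD).2 hBD.le) hcon
  linarith
end

section
/- Let N ≥ 3 be an integer, let (p,q) be a pair of primes compatible with N, and let n be an integer with 3 ≤ n ≤ N. Then min{f_x(t) : x ∈ S_n} equals f_{x_n(3)}(t) if t ≥ t_3; equals f_{x_n(i)}(t) if t_i ≤ t ≤ t_{i−1} for some 4 ≤ i ≤ n; and equals f_{x_n(n+1)}(t) if 0 < t ≤ t_n. -/
open Real

/-!
Writing `m_k = mmax p q k`, one has `f_{x_n(i)}(t)^t = h_{n+1-i} m_{i-2}^t + h_{n+2-i} m_{i-1}^t`,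
and by `h_{n+2-i} = h_{n+1-i} + h_{n-i}` consecutive terms differ by
`h_{n+1-i} (m_{i-1}^t + m_{i-2}^t - m_i^t)`. Since `(m_{i-1}/m_i)^t + (m_{i-2}/m_i)^t` is
decreasing in `t` and equals `1` at `t_i`, this difference is `≥ 0` for `t ≤ t_i` and `≤ 0`
for `t ≥ t_i`. As the `t_i` decrease, `i ↦ f_{x_n(i)}(t)` first decreases and then increases,
with its minimum at the `i` for which `t_i ≤ t ≤ t_{i-1}`.
-/

open Set

section RpowCrossing

variable {a b c t₀ s : ℝ}

lemma rpow_add_rpow_div_rpow (ha : 0 ≤ a) (hb : 0 ≤ b) (hc : 0 ≤ c) (s : ℝ) :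
    (a ^ s + b ^ s) / c ^ s = (a / c) ^ s + (b / c) ^ s := by
  rw [add_div, div_rpow ha hc, div_rpow hb hc]

lemma le_of_rpow_eq_rpow_add_rpow (ha : 0 < a) (hb : 0 < b) (hc : 0 < c) (ht₀ : 0 < t₀)
    (h : c ^ t₀ = a ^ t₀ + b ^ t₀) : a ≤ c := by
  rw [← rpow_le_rpow_iff ha.le hc.le ht₀, h]
  exact le_add_of_nonneg_right (rpow_nonneg hb.le _)

lemma rpow_le_rpow_add_rpow_of_le (ha : 0 < a) (hb : 0 < b) (hc : 0 < c) (ht₀ : 0 < t₀)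
    (h : c ^ t₀ = a ^ t₀ + b ^ t₀) (hs : s ≤ t₀) : c ^ s ≤ a ^ s + b ^ s := by
  have hac := le_of_rpow_eq_rpow_add_rpow ha hb hc ht₀ h
  have hbc := le_of_rpow_eq_rpow_add_rpow hb ha hc ht₀ (h.trans (add_comm _ _))
  rw [← one_le_div (rpow_pos_of_pos hc s), rpow_add_rpow_div_rpow ha.le hb.le hc.le]
  calc (1 : ℝ) = (a / c) ^ t₀ + (b / c) ^ t₀ := by
        rw [← rpow_add_rpow_div_rpow ha.le hb.le hc.le, ← h, div_self (rpow_pos_of_pos hc _).ne']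
    _ ≤ (a / c) ^ s + (b / c) ^ s := add_le_add
        (rpow_le_rpow_of_exponent_ge (div_pos ha hc) ((div_le_one hc).2 hac) hs)
        (rpow_le_rpow_of_exponent_ge (div_pos hb hc) ((div_le_one hc).2 hbc) hs)

lemma rpow_add_rpow_le_rpow_of_le (ha : 0 < a) (hb : 0 < b) (hc : 0 < c) (ht₀ : 0 < t₀)
    (h : c ^ t₀ = a ^ t₀ + b ^ t₀) (hs : t₀ ≤ s) : a ^ s + b ^ s ≤ c ^ s := by
  have hac := le_of_rpow_eq_rpow_add_rpow ha hb hc ht₀ h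
  have hbc := le_of_rpow_eq_rpow_add_rpow hb ha hc ht₀ (h.trans (add_comm _ _))
  rw [← div_le_one (rpow_pos_of_pos hc s), rpow_add_rpow_div_rpow ha.le hb.le hc.le]
  calc (a / c) ^ s + (b / c) ^ s ≤ (a / c) ^ t₀ + (b / c) ^ t₀ := add_le_add
        (rpow_le_rpow_of_exponent_ge (div_pos ha hc) ((div_le_one hc).2 hac) hs)
        (rpow_le_rpow_of_exponent_ge (div_pos hb hc) ((div_le_one hc).2 hbc) hs)
    _ = 1 := by
        rw [← rpow_add_rpow_div_rpow ha.le hb.le hc.le, ← h, div_self (rpow_pos_of_pos hc _).ne']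

end RpowCrossing

lemma le_of_antitoneOn_Icc_of_monotoneOn_Icc {β : Type*} [Preorder β] {f : ℕ → β}
    {a m b i : ℕ} (hdown : AntitoneOn f (Icc a m)) (hup : MonotoneOn f (Icc m b))
    (ham : a ≤ m) (hmb : m ≤ b) (hi : i ∈ Icc a b) : f m ≤ f i := by
  rcases le_total m i with hmi | him
  · exact hup ⟨le_rfl, hmb⟩ ⟨hmi, hi.2⟩ hmi
  · exact hdown ⟨hi.1, him⟩ ⟨ham, le_rfl⟩ him

lemma mmax_nonneg (p q m : ℕ) : 0 ≤ mmax p q m :=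
  le_max_of_le_left (mul_nonneg (Nat.cast_nonneg _) (log_natCast_nonneg p))

lemma mmax_pos {p : ℕ} (q : ℕ) {m : ℕ} (hp : 1 < p) (hm : 1 ≤ m) : 0 < mmax p q m :=
  lt_max_of_lt_left (mul_pos (Nat.cast_pos.2 (Nat.fib_pos.2 hm))
    (log_pos (by exact_mod_cast hp)))

noncomputable def fmeasPow (N p q : ℕ) (x : Fin N → ℕ) (t : ℝ) : ℝ :=
  ∑ i, (x i : ℝ) * mmax p q ((i : ℕ) + 1) ^ t

lemma fmeasPow_nonneg (N p q : ℕ) (x : Fin N → ℕ) (t : ℝ) : 0 ≤ fmeasPow N p q x t :=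
  Finset.sum_nonneg fun _ _ => mul_nonneg (Nat.cast_nonneg _) (rpow_nonneg (mmax_nonneg _ _ _) _)

lemma fmeas_le_fmeas {N p q : ℕ} {x y : Fin N → ℕ} {t : ℝ} (ht : 0 < t)
    (h : fmeasPow N p q x t ≤ fmeasPow N p q y t) : fmeas N p q x t ≤ fmeas N p q y t :=
  rpow_le_rpow (fmeasPow_nonneg N p q x t) h (one_div_pos.2 ht).le

lemma fmeasPow_xvec (N p q n : ℕ) {i : ℕ} (t : ℝ) (h3i : 3 ≤ i) (hiN : i ≤ N + 1) :
    fmeasPow N p q (xvec N n i) t =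
      Nat.fib (n + 1 - i) * mmax p q (i - 2) ^ t + Nat.fib (n + 2 - i) * mmax p q (i - 1) ^ t := by
  have hne : (⟨i - 3, by omega⟩ : Fin N) ≠ ⟨i - 2, by omega⟩ := by
    simp only [ne_eq, Fin.mk.injEq]; omega
  rw [fmeasPow, Fintype.sum_eq_add _ _ hne]
  · simp only [xvec, if_pos (show i - 3 + 3 = i by omega), if_neg (show i - 2 + 3 ≠ i by omega),
      if_pos (show i - 2 + 2 = i by omega), show i - 3 + 1 = i - 2 by omega,
      show i - 2 + 1 = i - 1 by omega]
  · rintro j ⟨hj3, hj2⟩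
    have hj3 : (j : ℕ) + 3 ≠ i := fun h => hj3 (Fin.ext (by simp only; omega))
    have hj2 : (j : ℕ) + 2 ≠ i := fun h => hj2 (Fin.ext (by simp only; omega))
    simp only [xvec, if_neg hj3, if_neg hj2, Nat.cast_zero, zero_mul]

lemma fmeasPow_xvec_sub_succ (N p q n : ℕ) {j : ℕ} (t : ℝ) (h3j : 3 ≤ j) (hjn : j ≤ n)
    (hnN : n ≤ N) :
    fmeasPow N p q (xvec N n j) t - fmeasPow N p q (xvec N n (j + 1)) t =
      Nat.fib (n + 1 - j) * (mmax p q (j - 1) ^ t + mmax p q (j - 2) ^ t - mmax p q j ^ t) := by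
  rw [fmeasPow_xvec N p q n t h3j (by omega), fmeasPow_xvec N p q n t (by omega) (by omega),
    show n + 2 - j = (n - j) + 2 by omega, Nat.fib_add_two, show n + 1 - j = n - j + 1 by omega,
    show n + 1 - (j + 1) = n - j by omega, show n + 2 - (j + 1) = n - j + 1 by omega,
    show j + 1 - 2 = j - 1 by omega, show j + 1 - 1 = j by omega]
  push_cast
  ring

section Crossing

variable {N p q n j : ℕ} {t t₀ : ℝ}

lemma peq_rpow_le (hp : 1 < p) (h3j : 3 ≤ j) (ht₀ : 0 < t₀) (heq : peq p q j t₀)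
    (ht : t ≤ t₀) : mmax p q j ^ t ≤ mmax p q (j - 1) ^ t + mmax p q (j - 2) ^ t :=
  rpow_le_rpow_add_rpow_of_le (mmax_pos q hp (by omega)) (mmax_pos q hp (by omega))
    (mmax_pos q hp (by omega)) ht₀ heq ht

lemma peq_rpow_ge (hp : 1 < p) (h3j : 3 ≤ j) (ht₀ : 0 < t₀) (heq : peq p q j t₀)
    (ht : t₀ ≤ t) : mmax p q (j - 1) ^ t + mmax p q (j - 2) ^ t ≤ mmax p q j ^ t :=
  rpow_add_rpow_le_rpow_of_le (mmax_pos q hp (by omega)) (mmax_pos q hp (by omega))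
    (mmax_pos q hp (by omega)) ht₀ heq ht

lemma fmeasPow_xvec_succ_le (hp : 1 < p) (h3j : 3 ≤ j) (hjn : j ≤ n) (hnN : n ≤ N)
    (ht₀ : 0 < t₀) (heq : peq p q j t₀) (ht : t ≤ t₀) :
    fmeasPow N p q (xvec N n (j + 1)) t ≤ fmeasPow N p q (xvec N n j) t := by
  have hdiff := fmeasPow_xvec_sub_succ N p q n t h3j hjn hnN
  have := mul_nonneg (Nat.cast_nonneg (α := ℝ) (Nat.fib (n + 1 - j)))
    (sub_nonneg.2 (peq_rpow_le hp h3j ht₀ heq ht))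
  linarith

lemma fmeasPow_xvec_le_succ (hp : 1 < p) (h3j : 3 ≤ j) (hjn : j ≤ n) (hnN : n ≤ N)
    (ht₀ : 0 < t₀) (heq : peq p q j t₀) (ht : t₀ ≤ t) :
    fmeasPow N p q (xvec N n j) t ≤ fmeasPow N p q (xvec N n (j + 1)) t := by
  have hdiff := fmeasPow_xvec_sub_succ N p q n t h3j hjn hnN
  have := mul_nonneg (Nat.cast_nonneg (α := ℝ) (Nat.fib (n + 1 - j)))
    (sub_nonneg.2 (peq_rpow_ge hp h3j ht₀ heq ht))
  linarith

end Crossing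

lemma isLeast_fmeas_Sset {N p q n i₀ : ℕ} {t : ℝ} (tt : ℕ → ℝ) (hp : 1 < p)
    (htt : ∀ j, 3 ≤ j → j ≤ n → 0 < tt j ∧ peq p q j (tt j))
    (h3n : 3 ≤ n) (hnN : n ≤ N) (h3i₀ : 3 ≤ i₀) (hi₀n : i₀ ≤ n + 1)
    (hbefore : ∀ j, 3 ≤ j → j < i₀ → t ≤ tt j) (hafter : ∀ j, i₀ ≤ j → j ≤ n → tt j ≤ t)
    (ht : 0 < t) :
    IsLeast ((fun x => fmeas N p q x t) '' Sset N n) (fmeas N p q (xvec N n i₀) t) := by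
  rw [Sset, if_neg (by omega)]
  refine ⟨⟨_, ⟨i₀, h3i₀, hi₀n, rfl⟩, rfl⟩, ?_⟩
  rintro _ ⟨_, ⟨i, h3i, hin, rfl⟩, rfl⟩
  refine fmeas_le_fmeas ht (le_of_antitoneOn_Icc_of_monotoneOn_Icc
    (f := fun i => fmeasPow N p q (xvec N n i) t) ?_ ?_ h3i₀ hi₀n ⟨h3i, hin⟩)
  · refine antitoneOn_of_add_one_le ordConnected_Icc fun j _ ⟨h3j, _⟩ ⟨_, hji₀⟩ => ?_
    obtain ⟨hpos, heq⟩ := htt j h3j (by omega)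
    exact fmeasPow_xvec_succ_le hp h3j (by omega) hnN hpos heq (hbefore j h3j (by omega))
  · refine monotoneOn_of_le_add_one ordConnected_Icc fun j _ ⟨hi₀j, _⟩ ⟨_, hjn⟩ => ?_
    obtain ⟨hpos, heq⟩ := htt j (by omega) (by omega)
    exact fmeasPow_xvec_le_succ hp (by omega) (by omega) hnN hpos heq (hafter j hi₀j (by omega))

theorem stmt6_general (N p q : ℕ) (hp : p.Prime)
    (tt : ℕ → ℝ)
    (htt : ∀ m : ℕ, 3 ≤ m → m ≤ N + 1 →
      (0 < tt m ∧ peq p q m (tt m)) ∧ ∀ t' : ℝ, 0 < t' → peq p q m t' → t' = tt m)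
    (hdec : ∀ m : ℕ, 3 ≤ m → m ≤ N → tt (m + 1) < tt m)
    (n : ℕ) (h3n : 3 ≤ n) (hnN : n ≤ N) (t : ℝ) (ht : 0 < t) :
    (tt 3 ≤ t →
      IsLeast ((fun x => fmeas N p q x t) '' Sset N n) (fmeas N p q (xvec N n 3) t)) ∧
    (∀ i : ℕ, 4 ≤ i → i ≤ n → tt i ≤ t → t ≤ tt (i - 1) →
      IsLeast ((fun x => fmeas N p q x t) '' Sset N n) (fmeas N p q (xvec N n i) t)) ∧
    (t ≤ tt n →
      IsLeast ((fun x => fmeas N p q x t) '' Sset N n)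
        (fmeas N p q (xvec N n (n + 1)) t)) := by
  have hanti : AntitoneOn tt (Icc 3 (N + 1)) :=
    antitoneOn_of_add_one_le ordConnected_Icc fun m _ hm hm1 =>
      (hdec m hm.1 (by simpa using hm1.2)).le
  have hle : ∀ {a b}, 3 ≤ a → a ≤ b → b ≤ N + 1 → tt b ≤ tt a := fun ha hab hb =>
    hanti ⟨ha, by omega⟩ ⟨by omega, hb⟩ hab
  have htt' : ∀ j, 3 ≤ j → j ≤ n → 0 < tt j ∧ peq p q j (tt j) :=
    fun j hj hjn => (htt j hj (by omega)).1
  refine ⟨fun ht3 => ?_, fun i h4i hin hti hti' => ?_, fun htn => ?_⟩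
  · exact isLeast_fmeas_Sset tt hp.one_lt htt' h3n hnN le_rfl (by omega)
      (fun j hj hj' => by omega) (fun j hj hjn => (hle le_rfl hj (by omega)).trans ht3) ht
  · exact isLeast_fmeas_Sset tt hp.one_lt htt' h3n hnN (by omega) (by omega)
      (fun j hj hj' => hti'.trans (hle hj (by omega) (by omega)))
      (fun j hj hjn => (hle (by omega) hj (by omega)).trans hti) ht
  · exact isLeast_fmeas_Sset tt hp.one_lt htt' h3n hnN (by omega) le_rfl
      (fun j hj hj' => htn.trans (hle hj (by omega) (by omega))) (fun j hj hjn => by omega) ht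

/-- Theorem `MinimumOver`: for `N ≥ 3`, a pair of primes `(p,q)` compatible
with `N`, and `3 ≤ n ≤ N`, the minimum `min{f_x(t) : x ∈ S_n}` equals `f_{x_n(3)}(t)` when
`t ≥ t_3`, equals `f_{x_n(i)}(t)` when `t_i ≤ t ≤ t_{i-1}` for some `4 ≤ i ≤ n`, and equals
`f_{x_n(n+1)}(t)` when `0 < t ≤ t_n`. -/
theorem stmt6 (N p q : ℕ) (hN : 3 ≤ N) (hp : p.Prime) (hq : q.Prime) (hW : CondW N p q)
    (tt : ℕ → ℝ)
    (htt : ∀ m : ℕ, 3 ≤ m → m ≤ N + 1 →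
      (0 < tt m ∧ peq p q m (tt m)) ∧ ∀ t' : ℝ, 0 < t' → peq p q m t' → t' = tt m)
    (hdec : ∀ m : ℕ, 3 ≤ m → m ≤ N → tt (m + 1) < tt m)
    (n : ℕ) (h3n : 3 ≤ n) (hnN : n ≤ N) (t : ℝ) (ht : 0 < t) :
    (tt 3 ≤ t →
      IsLeast ((fun x => fmeas N p q x t) '' Sset N n) (fmeas N p q (xvec N n 3) t)) ∧
    (∀ i : ℕ, 4 ≤ i → i ≤ n → tt i ≤ t → t ≤ tt (i - 1) →
      IsLeast ((fun x => fmeas N p q x t) '' Sset N n) (fmeas N p q (xvec N n i) t)) ∧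
    (t ≤ tt n →
      IsLeast ((fun x => fmeas N p q x t) '' Sset N n)
        (fmeas N p q (xvec N n (n + 1)) t)) :=
  stmt6_general N p q hp tt htt hdec n h3n hnN t ht
end
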